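/- Let u, v : V → ℝ^d be two vector-valued signals on the nodes of a connected weighted graph G = (V, E, A) with block-incidence matrix D. Then Σ_{i∈V} (u^(i))ᵀ v^(i) ≤ (1/|V|)·(Σ_{i∈V} v^(i))ᵀ(Σ_{j∈V} u^(j)) + ‖(D†)ᵀ v‖_{2,∞} · ‖u‖_TV, where ‖u‖_TV = Σ_{{i,j}∈E} A_{ij}‖u^(j) − u^(i)‖₂ and ‖w‖_{2,∞} = max_e ‖w^(e)‖₂ over edge blocks. -/

import Mathlib

open Finset
open scoped RealInnerProductSpace

/-!
By the first Penrose equation `u - D† D u` lies in `ker D`, which on a connected graph with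
nonzero weights consists of the constant signals. Since `D† D` is symmetric and kills constants,
`D† D u` is orthogonal to them, so `D† D u = u - ū` with `ū` the mean of `u`. Hence
`∑ ⟪uᵢ, vᵢ⟫ = |V|⁻¹ ⟪∑ v, ∑ u⟫ + ⟪v, D† D u⟫`, and the last term is `⟪(D†)ᵀ v, D u⟫`, which
Cauchy–Schwarz on each edge block bounds by `‖(D†)ᵀ v‖_{2,∞} ‖D u‖_{2,1} = ‖(D†)ᵀ v‖_{2,∞} ‖u‖_TV`.
-/

variable {V ι F : Type*} [NormedAddCommGroup F] [InnerProductSpace ℝ F]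

def blockIncidence (inc : ι → V × V) (A : ι → ℝ) : (V → F) →ₗ[ℝ] (ι → F) :=
  LinearMap.pi fun e => A e •
    (LinearMap.proj (R := ℝ) (φ := fun _ : V => F) (inc e).1 - LinearMap.proj (inc e).2)

@[simp]
theorem blockIncidence_apply (inc : ι → V × V) (A : ι → ℝ) (w : V → F) (e : ι) :
    blockIncidence inc A w e = A e • (w (inc e).1 - w (inc e).2) := rfl

theorem blockIncidence_const (inc : ι → V × V) (A : ι → ℝ) (c : F) :
    blockIncidence inc A (fun _ => c) = 0 := by
  ext e : 1
  simp

theorem norm_blockIncidence_apply {inc : ι → V × V} {A : ι → ℝ} (hA : ∀ e, 0 ≤ A e)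
    (w : V → F) (e : ι) :
    ‖blockIncidence inc A w e‖ = A e * ‖w (inc e).2 - w (inc e).1‖ := by
  rw [blockIncidence_apply, norm_smul, Real.norm_of_nonneg (hA e), norm_sub_rev]

theorem eq_of_blockIncidence_eq_zero {inc : ι → V × V} {A : ι → ℝ} (hA : ∀ e, A e ≠ 0)
    (hconn : ∀ i j : V, Relation.ReflTransGen
      (fun a b => ∃ e, inc e = (a, b) ∨ inc e = (b, a)) i j)
    {w : V → F} (hw : blockIncidence inc A w = 0) (i j : V) : w i = w j := by
  have hedge : ∀ e, w (inc e).1 = w (inc e).2 := fun e => by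
    simpa [sub_eq_zero, hA e] using congrFun hw e
  have hstep : ∀ a b : V, (∃ e, inc e = (a, b) ∨ inc e = (b, a)) → w a = w b := by
    rintro a b ⟨e, he | he⟩
    · simpa [he] using hedge e
    · simpa [he] using (hedge e).symm
  simpa [Relation.reflTransGen_eq_self] using (hconn i j).lift w hstep

variable [Fintype V]

noncomputable def centered (w : V → F) : V → F :=
  fun i => w i - (Fintype.card V : ℝ)⁻¹ • ∑ j, w j

theorem sum_inner_eq_inner_sum_add_sum_inner_centered (u v : V → F) :
    ∑ i, ⟪u i, v i⟫ =
      (Fintype.card V : ℝ)⁻¹ * ⟪∑ i, v i, ∑ j, u j⟫ + ∑ i, ⟪centered u i, v i⟫ := by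
  simp only [centered, inner_sub_left, sum_sub_distrib, real_inner_smul_left, ← mul_sum,
    ← inner_sum, real_inner_comm (∑ j, u j)]
  ring

theorem sum_inner_le_iSup_norm_mul_sum_norm [Fintype ι] (x y : ι → F) :
    ∑ e, ⟪x e, y e⟫ ≤ (⨆ e, ‖x e‖) * ∑ e, ‖y e‖ := by
  rw [mul_sum]
  gcongr with e
  calc ⟪x e, y e⟫ ≤ ‖x e‖ * ‖y e‖ := real_inner_le_norm _ _
    _ ≤ (⨆ e, ‖x e‖) * ‖y e‖ := by
      gcongr
      exact le_ciSup (f := fun e => ‖x e‖) (Set.finite_range _).bddAbove e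

section PseudoInverse

variable {inc : ι → V × V} {A : ι → ℝ} {G : (ι → F) → V → F}

theorem sum_pinv_blockIncidence_eq_zero
    (hsymm : ∀ w w', ∑ i, ⟪G (blockIncidence inc A w) i, w' i⟫ =
      ∑ i, ⟪w i, G (blockIncidence inc A w') i⟫)
    (w : V → F) : ∑ i, G (blockIncidence inc A w) i = 0 := by
  set s := ∑ i, G (blockIncidence inc A w) i
  have hG0 : ∑ i, ⟪G 0 i, w i⟫ = 0 := by simpa using hsymm 0 w
  refine (inner_self_eq_zero (𝕜 := ℝ)).mp ?_
  calc ⟪s, s⟫ = ∑ i, ⟪G (blockIncidence inc A w) i, s⟫ := sum_inner _ _ _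
    _ = ∑ i, ⟪w i, G (blockIncidence inc A fun _ => s) i⟫ := hsymm w fun _ => s
    _ = ∑ i, ⟪G 0 i, w i⟫ := by simp only [blockIncidence_const, real_inner_comm]
    _ = 0 := hG0

theorem pinv_blockIncidence_eq_centered [Nonempty V] (hA : ∀ e, A e ≠ 0)
    (hconn : ∀ i j : V, Relation.ReflTransGen
      (fun a b => ∃ e, inc e = (a, b) ∨ inc e = (b, a)) i j)
    (hPen1 : ∀ w, blockIncidence inc A (G (blockIncidence inc A w)) = blockIncidence inc A w)
    (hsymm : ∀ w w', ∑ i, ⟪G (blockIncidence inc A w) i, w' i⟫ =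
      ∑ i, ⟪w i, G (blockIncidence inc A w') i⟫)
    (w : V → F) : G (blockIncidence inc A w) = centered w := by
  set c := w - G (blockIncidence inc A w)
  have hc : ∀ i j, c i = c j :=
    eq_of_blockIncidence_eq_zero hA hconn (by rw [map_sub, hPen1, sub_self])
  have hsum : ∑ i, c i = ∑ i, w i := by
    simp [c, sum_sub_distrib, sum_pinv_blockIncidence_eq_zero hsymm]
  funext i
  have hmean : (Fintype.card V : ℝ)⁻¹ • ∑ j, w j = c i := by
    rw [← hsum, sum_congr rfl fun j _ => hc j i, sum_const, card_univ,
      ← Nat.cast_smul_eq_nsmul ℝ, inv_smul_smul₀ (Nat.cast_ne_zero.mpr Fintype.card_ne_zero)]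
  simp [centered, hmean, c]

end PseudoInverse

theorem networked_decomposition_inequality_general
    (N E d : ℕ) (hN : 0 < N)
    (inc : Fin E → Fin N × Fin N)
    (A : Fin E → ℝ) (hA : ∀ e, 0 < A e)
    (hconn : ∀ i j : Fin N, Relation.ReflTransGen
      (fun a b => ∃ e, inc e = (a, b) ∨ inc e = (b, a)) i j)
    -- block incidence operator D
    (D : (Fin N → EuclideanSpace ℝ (Fin d)) → (Fin E → EuclideanSpace ℝ (Fin d)))
    (hD : ∀ w e, D w e = A e • (w (inc e).1 - w (inc e).2))
    -- G = D†, the Moore–Penrose pseudoinverse of D (Penrose equations)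
    (G : (Fin E → EuclideanSpace ℝ (Fin d)) → (Fin N → EuclideanSpace ℝ (Fin d)))
    (hPen1 : ∀ w, D (G (D w)) = D w)
    (hPen4 : ∀ w w', (∑ i, inner ℝ (G (D w) i) (w' i) : ℝ) = ∑ i, inner ℝ (w i) (G (D w') i))
    -- Gt = (D†)ᵀ, the transpose of G
    (Gt : (Fin N → EuclideanSpace ℝ (Fin d)) → (Fin E → EuclideanSpace ℝ (Fin d)))
    (hGt : ∀ v x, (∑ e, inner ℝ (Gt v e) (x e) : ℝ) = ∑ i, inner ℝ (v i) (G x i))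
    (u v : Fin N → EuclideanSpace ℝ (Fin d)) :
    (∑ i, inner ℝ (u i) (v i) : ℝ) ≤
      (1 / (N : ℝ)) * (inner ℝ (∑ i, v i) (∑ j, u j) : ℝ) +
      (⨆ e : Fin E, ‖Gt v e‖) *
        (∑ e, A e * ‖u (inc e).2 - u (inc e).1‖) := by
  have : Nonempty (Fin N) := Fin.pos_iff_nonempty.mp hN
  obtain rfl : D = blockIncidence inc A := funext fun w => funext (hD w)
  have hGD : G (blockIncidence inc A u) = centered u :=
    pinv_blockIncidence_eq_centered (fun e => (hA e).ne') hconn hPen1 hPen4 u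
  calc ∑ i, ⟪u i, v i⟫
      = 1 / (N : ℝ) * ⟪∑ i, v i, ∑ j, u j⟫ + ∑ e, ⟪Gt v e, blockIncidence inc A u e⟫ := by
        rw [sum_inner_eq_inner_sum_add_sum_inner_centered, hGt, hGD, Fintype.card_fin, one_div]
        simp only [real_inner_comm]
    _ ≤ 1 / (N : ℝ) * ⟪∑ i, v i, ∑ j, u j⟫ +
        (⨆ e, ‖Gt v e‖) * ∑ e, ‖blockIncidence inc A u e‖ := by
      gcongr
      exact sum_inner_le_iSup_norm_mul_sum_norm _ _
    _ = _ := by simp only [norm_blockIncidence_apply fun e => (hA e).le]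

/-- Lemma 1: For vector-valued signals u, v on a connected weighted
graph with block-incidence operator D (with pseudoinverse D†),
Σᵢ ⟨u^(i), v^(i)⟩ ≤ (1/|V|)·⟨Σᵢ v^(i), Σⱼ u^(j)⟩ + ‖(D†)ᵀv‖_{2,∞}·‖u‖_TV. -/
theorem networked_decomposition_inequality
    (N E d : ℕ) (hN : 0 < N)
    (inc : Fin E → Fin N × Fin N) (hloop : ∀ e, (inc e).1 ≠ (inc e).2)
    (A : Fin E → ℝ) (hA : ∀ e, 0 < A e)
    (hconn : ∀ i j : Fin N, Relation.ReflTransGen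
      (fun a b => ∃ e, inc e = (a, b) ∨ inc e = (b, a)) i j)
    -- block incidence operator D
    (D : (Fin N → EuclideanSpace ℝ (Fin d)) → (Fin E → EuclideanSpace ℝ (Fin d)))
    (hDlin : IsLinearMap ℝ D)
    (hD : ∀ w e, D w e = A e • (w (inc e).1 - w (inc e).2))
    -- G = D†, the Moore–Penrose pseudoinverse of D (Penrose equations)
    (G : (Fin E → EuclideanSpace ℝ (Fin d)) → (Fin N → EuclideanSpace ℝ (Fin d)))
    (hGlin : IsLinearMap ℝ G)
    (hPen1 : ∀ w, D (G (D w)) = D w) (hPen2 : ∀ x, G (D (G x)) = G x)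
    (hPen3 : ∀ x y, (∑ e, inner ℝ (D (G x) e) (y e) : ℝ) = ∑ e, inner ℝ (x e) (D (G y) e))
    (hPen4 : ∀ w w', (∑ i, inner ℝ (G (D w) i) (w' i) : ℝ) = ∑ i, inner ℝ (w i) (G (D w') i))
    -- Gt = (D†)ᵀ, the transpose of G
    (Gt : (Fin N → EuclideanSpace ℝ (Fin d)) → (Fin E → EuclideanSpace ℝ (Fin d)))
    (hGt : ∀ v x, (∑ e, inner ℝ (Gt v e) (x e) : ℝ) = ∑ i, inner ℝ (v i) (G x i))
    (u v : Fin N → EuclideanSpace ℝ (Fin d)) :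
    (∑ i, inner ℝ (u i) (v i) : ℝ) ≤
      (1 / (N : ℝ)) * (inner ℝ (∑ i, v i) (∑ j, u j) : ℝ) +
      (⨆ e : Fin E, ‖Gt v e‖) *
        (∑ e, A e * ‖u (inc e).2 - u (inc e).1‖) :=
  networked_decomposition_inequality_general N E d hN inc A hA hconn D hD G hPen1 hPen4 Gt hGt u v
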